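/- arXiv:1003.0415 — 2 statements merged into one kernel-verified Lean document; each statement's English description precedes it below -/
import Mathlib

section
/- Let Φ be an m×N complex matrix with unit-norm columns and coherence μ > 0. If two distinct vectors x, y ∈ ℂ^N satisfy Φx = Φy, then |supp(x)| + |supp(y)| > 1/μ. In particular, if a signal has two different representations, one supported on S and one supported on T, then |S| + |T| > 1/μ. -/
noncomputable section

open Matrix MeasureTheory Finset

namespace SparsityGap

variable {m N : ℕ}

/-- The `j`-th column of the dictionary `Φ`. -/
def col (Φ : Matrix (Fin m) (Fin N) ℂ) (j : Fin N) : Fin m → ℂ := fun i => Φ i j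

/-- The column submatrix `Φ_S` of `Φ` with columns listed in `S`. -/
def sub (Φ : Matrix (Fin m) (Fin N) ℂ) (S : Finset (Fin N)) :
    Matrix (Fin m) {j // j ∈ S} ℂ :=
  Φ.submatrix id (fun j => (j : Fin N))

/-- `range (Φ_S)`: the span of the columns of `Φ` indexed by `S`. -/
def colSpan (Φ : Matrix (Fin m) (Fin N) ℂ) (S : Finset (Fin N)) :
    Submodule ℂ (Fin m → ℂ) :=
  Submodule.span ℂ (Set.range fun j : {j // j ∈ S} => col Φ j)

/-- `S` indexes a linearly independent family of columns of `Φ`. -/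
def LinIndepOn (Φ : Matrix (Fin m) (Fin N) ℂ) (S : Finset (Fin N)) : Prop :=
  LinearIndependent ℂ (fun j : {j // j ∈ S} => col Φ j)

/-- Each column of `Φ` has unit Euclidean norm. -/
def UnitColumns (Φ : Matrix (Fin m) (Fin N) ℂ) : Prop :=
  ∀ j, ∑ i, ‖Φ i j‖ ^ 2 = 1

/-- The coherence of `Φ` (the maximal inner product between distinct columns)
is at most `μ`. -/
def CoherenceLE (Φ : Matrix (Fin m) (Fin N) ℂ) (μ : ℝ) : Prop :=
  ∀ j k, j ≠ k → ‖∑ i, star (Φ i j) * Φ i k‖ ≤ μ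

/-- The ℓ₂ → ℓ₂ operator (spectral) norm of a matrix. -/
def opNorm {α β : Type*} [Fintype α] [Fintype β] [DecidableEq β]
    (A : Matrix α β ℂ) : ℝ :=
  ‖LinearMap.toContinuousLinearMap (Matrix.toEuclideanLin A)‖

/-- The Euclidean norm of a finitely supported vector. -/
def enorm {α : Type*} [Fintype α] (w : α → ℂ) : ℝ :=
  Real.sqrt (∑ j, ‖w j‖ ^ 2)

end SparsityGap

/-!
If `Φ x = Φ y` with `x ≠ y`, then `z = x - y` is a nonzero vector of the kernel of `Φ`. Row `j` of
`Φᴴ Φ z = 0` reads `z j = -∑_{k ≠ j} ⟪φ_j, φ_k⟫ z k`, since the Gram matrix has unit diagonal. At an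
index `j` where `|z j|` is maximal this gives `|z j| ≤ μ (|supp z| - 1) |z j|`, i.e.
`|supp z| ≥ 1 + 1/μ`, and `supp z ⊆ supp x ∪ supp y`.
-/

namespace SparsityGap

open Function

theorem sum_norm_le_ncard_support_mul {ι E : Type*} [Fintype ι] [NormedAddCommGroup E]
    {z : ι → E} {j : ι} (hj : ∀ k, ‖z k‖ ≤ ‖z j‖) :
    ∑ k, ‖z k‖ ≤ (support z).ncard * ‖z j‖ := by
  classical
  calc ∑ k, ‖z k‖ = ∑ k ∈ (support z).toFinset, ‖z k‖ :=
        (sum_subset (subset_univ _) fun k _ hk => by simp_all).symm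
    _ ≤ ∑ _k ∈ (support z).toFinset, ‖z j‖ := sum_le_sum fun k _ => hj k
    _ = (support z).ncard * ‖z j‖ := by
        rw [sum_const, nsmul_eq_mul, Set.ncard_eq_toFinset_card']

variable {m N : ℕ} {Φ : Matrix (Fin m) (Fin N) ℂ} {μ : ℝ}

theorem conjTranspose_mul_self_apply (Φ : Matrix (Fin m) (Fin N) ℂ) (j k : Fin N) :
    (Φᴴ * Φ) j k = ∑ i, star (Φ i j) * Φ i k := by
  simp [mul_apply]

theorem UnitColumns.conjTranspose_mul_self_apply_self (hcol : UnitColumns Φ) (j : Fin N) :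
    (Φᴴ * Φ) j j = 1 := by
  simp only [conjTranspose_mul_self_apply, Complex.star_def, Complex.conj_mul']
  exact_mod_cast hcol j

theorem CoherenceLE.norm_conjTranspose_mul_self_apply_le (hcoh : CoherenceLE Φ μ) {j k : Fin N}
    (hjk : j ≠ k) : ‖(Φᴴ * Φ) j k‖ ≤ μ := by
  rw [conjTranspose_mul_self_apply]
  exact hcoh j k hjk

theorem norm_le_mul_sum_erase_of_mulVec_eq_zero (hcol : UnitColumns Φ) (hcoh : CoherenceLE Φ μ)
    {z : Fin N → ℂ} (hz : Φ *ᵥ z = 0) (j : Fin N) :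
    ‖z j‖ ≤ μ * ∑ k ∈ univ.erase j, ‖z k‖ := by
  have hrow : z j + ∑ k ∈ univ.erase j, (Φᴴ * Φ) j k * z k = 0 := by
    have hGz : ((Φᴴ * Φ) *ᵥ z) j = 0 := by rw [← mulVec_mulVec, hz, mulVec_zero, Pi.zero_apply]
    rwa [mulVec, dotProduct, ← add_sum_erase _ _ (mem_univ j),
      hcol.conjTranspose_mul_self_apply_self, one_mul] at hGz
  calc ‖z j‖ = ‖∑ k ∈ univ.erase j, (Φᴴ * Φ) j k * z k‖ := by
        rw [eq_neg_of_add_eq_zero_left hrow, norm_neg]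
    _ ≤ ∑ k ∈ univ.erase j, ‖(Φᴴ * Φ) j k‖ * ‖z k‖ := norm_sum_le_of_le _ fun k _ => norm_mul_le _ _
    _ ≤ ∑ k ∈ univ.erase j, μ * ‖z k‖ := sum_le_sum fun k hk =>
        mul_le_mul_of_nonneg_right
          (hcoh.norm_conjTranspose_mul_self_apply_le (ne_of_mem_erase hk).symm) (norm_nonneg _)
    _ = μ * ∑ k ∈ univ.erase j, ‖z k‖ := (mul_sum ..).symm

theorem one_add_one_div_le_ncard_support (hcol : UnitColumns Φ) (hcoh : CoherenceLE Φ μ)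
    {z : Fin N → ℂ} (hz0 : z ≠ 0) (hz : Φ *ᵥ z = 0) :
    1 + 1 / μ ≤ (support z).ncard := by
  obtain ⟨j₀, hj₀⟩ := ne_iff.mp hz0
  have : Nonempty (Fin N) := ⟨j₀⟩
  obtain ⟨j, hj⟩ := Finite.exists_max fun k => ‖z k‖
  have hpos : 0 < ‖z j‖ := (norm_pos_iff.mpr hj₀).trans_le (hj j₀)
  have hle := norm_le_mul_sum_erase_of_mulVec_eq_zero hcol hcoh hz j
  have hrest : ∑ k ∈ univ.erase j, ‖z k‖ ≤ ((support z).ncard - 1) * ‖z j‖ := by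
    rw [sum_erase_eq_sub (mem_univ j)]
    linarith [sum_norm_le_ncard_support_mul hj]
  have hμ : 0 < μ := pos_of_mul_pos_left (hpos.trans_le hle) (sum_nonneg fun k _ => norm_nonneg _)
  have hone : 1 ≤ μ * ((support z).ncard - 1) := by nlinarith
  linarith [(div_le_iff₀' hμ).mpr hone]

theorem dictionary_uncertainty_principle_general {m N : ℕ} (Φ : Matrix (Fin m) (Fin N) ℂ)
    (μ : ℝ) (hcol : UnitColumns Φ) (hcoh : CoherenceLE Φ μ)
    (x y : Fin N → ℂ) (hxy : x ≠ y) (hrep : Φ.mulVec x = Φ.mulVec y) :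
    1 / μ < ((Function.support x).ncard : ℝ) + (Function.support y).ncard := by
  have hker : Φ *ᵥ (x - y) = 0 := by rw [mulVec_sub, hrep, sub_self]
  have hspark := one_add_one_div_le_ncard_support hcol hcoh (sub_ne_zero.mpr hxy) hker
  have hsupp : (support (x - y)).ncard ≤ (support x).ncard + (support y).ncard :=
    (Set.ncard_le_ncard (support_sub x y) (Set.toFinite _)).trans (Set.ncard_union_le _ _)
  calc 1 / μ < 1 + 1 / μ := lt_one_add _
    _ ≤ (support (x - y)).ncard := hspark
    _ ≤ (support x).ncard + (support y).ncard := by exact_mod_cast hsupp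

/-- Donoho–Elad dictionary uncertainty principle.
If `Φ` has unit-norm columns and coherence at most `μ > 0`, and two distinct
vectors `x, y` represent the same signal, then `|supp x| + |supp y| > μ⁻¹`. -/
theorem dictionary_uncertainty_principle {m N : ℕ} (Φ : Matrix (Fin m) (Fin N) ℂ)
    (μ : ℝ) (hμ : 0 < μ) (hcol : UnitColumns Φ) (hcoh : CoherenceLE Φ μ)
    (x y : Fin N → ℂ) (hxy : x ≠ y) (hrep : Φ.mulVec x = Φ.mulVec y) :
    1 / μ < ((Function.support x).ncard : ℝ) + (Function.support y).ncard :=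
  dictionary_uncertainty_principle_general Φ μ hcol hcoh x y hxy hrep

end SparsityGap
end
end

section
/- Let Φ be an m×N complex matrix. Let S index a linearly independent family of columns, and let T be any set of column indices. Assume |T| < rank(Φ_R) where R = S ∪ T. Then for every probability measure ν on ℂ^S absolutely continuous with respect to Lebesgue measure, ν{ x ∈ ℂ^S : Φ_S x ∈ range(Φ_T) } = 0; that is, a generic signal in range(Φ_S) almost surely has no representation using the columns in T. -/
/-!
The set of bad coefficient vectors `{x | Φ_S x ∈ range Φ_T}` is the preimage of a subspace under
a linear map, hence a complex subspace of `ℂ^S`. It is proper: otherwise every column of `Φ_S`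
lies in `range Φ_T`, so `range Φ_{S ∪ T} = range Φ_T` and `rank Φ_{S ∪ T} ≤ |T|`. A proper
subspace is Lebesgue-null, and `ν ≪ volume`.
-/

noncomputable section

open Matrix MeasureTheory Finset

open Module

theorem MeasureTheory.Measure.addHaar_submodule_of_ne_top {𝕜 E : Type*} [Semiring 𝕜]
    [NormedAddCommGroup E] [NormedSpace ℝ E] [MeasurableSpace E] [BorelSpace E]
    [FiniteDimensional ℝ E] [Module 𝕜 E] [SMul ℝ 𝕜] [IsScalarTower ℝ 𝕜 E]
    (μ : Measure E) [μ.IsAddHaarMeasure] {p : Submodule 𝕜 E} (hp : p ≠ ⊤) :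
    μ p = 0 :=
  μ.addHaar_submodule (p.restrictScalars ℝ) (by rwa [Ne, Submodule.restrictScalars_eq_top_iff])

namespace SparsityGap

variable {m N : ℕ}

theorem colSpan_eq_span_image (Φ : Matrix (Fin m) (Fin N) ℂ) (U : Finset (Fin N)) :
    colSpan Φ U = Submodule.span ℂ (col Φ '' U) := by
  rw [colSpan, Set.image_eq_range]
  rfl

theorem colSpan_union (Φ : Matrix (Fin m) (Fin N) ℂ) (S T : Finset (Fin N)) :
    colSpan Φ (S ∪ T) = colSpan Φ S ⊔ colSpan Φ T := by
  simp only [colSpan_eq_span_image, Finset.coe_union, Set.image_union, Submodule.span_union]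

theorem range_sub_mulVecLin (Φ : Matrix (Fin m) (Fin N) ℂ) (U : Finset (Fin N)) :
    LinearMap.range (sub Φ U).mulVecLin = colSpan Φ U := by
  rw [Matrix.range_mulVecLin]
  rfl

theorem rank_sub (Φ : Matrix (Fin m) (Fin N) ℂ) (U : Finset (Fin N)) :
    (sub Φ U).rank = finrank ℂ (colSpan Φ U) := by
  rw [Matrix.rank, range_sub_mulVecLin]

theorem finrank_colSpan_le_card (Φ : Matrix (Fin m) (Fin N) ℂ) (U : Finset (Fin N)) :
    finrank ℂ (colSpan Φ U) ≤ U.card :=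
  (finrank_range_le_card _).trans (Fintype.card_coe U).le

theorem not_colSpan_le_of_card_lt_rank {Φ : Matrix (Fin m) (Fin N) ℂ} {S T : Finset (Fin N)}
    (hrank : T.card < (sub Φ (S ∪ T)).rank) : ¬ colSpan Φ S ≤ colSpan Φ T := by
  intro hle
  rw [rank_sub, colSpan_union, sup_eq_right.2 hle] at hrank
  exact hrank.not_ge (finrank_colSpan_le_card Φ T)

theorem generic_signal_of_rank_general {m N : ℕ} (Φ : Matrix (Fin m) (Fin N) ℂ)
    (S T : Finset (Fin N))
    (hrank : T.card < (sub Φ (S ∪ T)).rank)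
    (ν : Measure ({j // j ∈ S} → ℂ))
    (hac : ν ≪ volume) :
    ν {x | (sub Φ S).mulVec x ∈ colSpan Φ T} = 0 := by
  have hproper : (colSpan Φ T).comap (sub Φ S).mulVecLin ≠ ⊤ := by
    rw [Ne, ← LinearMap.range_le_iff_comap, range_sub_mulVecLin]
    exact not_colSpan_le_of_card_lt_rank hrank
  exact hac (volume.addHaar_submodule_of_ne_top hproper)

/-- Corollary 7.  Suppose `S` indexes a linearly independent
family of columns, `T` is any set of column indices, and
`|T| < rank(Φ_R)` where `R = S ∪ T`.  Then a generic signal `u = Φ_S x`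
almost surely has no representation over `T`. -/
theorem generic_signal_of_rank {m N : ℕ} (Φ : Matrix (Fin m) (Fin N) ℂ)
    (S T : Finset (Fin N)) (hS : LinIndepOn Φ S)
    (hrank : T.card < (sub Φ (S ∪ T)).rank)
    (ν : Measure ({j // j ∈ S} → ℂ)) (hν : IsProbabilityMeasure ν)
    (hac : ν ≪ volume) :
    ν {x | (sub Φ S).mulVec x ∈ colSpan Φ T} = 0 :=
  generic_signal_of_rank_general Φ S T hrank ν hac

end SparsityGap
end
end
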